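/- arXiv:1001.5220 — 2 statements merged into one kernel-verified Lean document; each statement's English description precedes it below -/
import Mathlib

section
/- Let A be an integral domain, ⋆ a star operation of finite type on A, and a a nonzero element of A. Assume there exists a finite collection ℱ ∈ Σ^⋆_a that is a maximal element of the poset ((Σ')^⋆_a, ⊆). Then the set of ⋆-maximal ideals of A containing a equals {𝔪_𝔞 : 𝔞 ∈ ℱ}, where 𝔪_𝔞 := {x ∈ A : ((x) + 𝔞)^⋆ ≠ A}; in particular, only finitely many ⋆-maximal ideals of A contain a. -/
open scoped nonZeroDivisors

/-- A star operation on an integral domain `A` with quotient field `K`: a map on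
(nonzero) fractional ideals satisfying `A^⋆ = A`, `(xI)^⋆ = x·I^⋆`, `I ⊆ I^⋆`,
monotonicity and idempotency. -/
structure StarOperation (A : Type*) [CommRing A] [IsDomain A]
    (K : Type*) [Field K] [Algebra A K] [IsFractionRing A K] where
  star : FractionalIdeal A⁰ K → FractionalIdeal A⁰ K
  star_one : star 1 = 1
  star_smul : ∀ (x : K), x ≠ 0 → ∀ I : FractionalIdeal A⁰ K, I ≠ 0 →
    star (FractionalIdeal.spanSingleton A⁰ x * I) = FractionalIdeal.spanSingleton A⁰ x * star I
  le_star : ∀ I : FractionalIdeal A⁰ K, I ≠ 0 → I ≤ star I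
  mono : ∀ I J : FractionalIdeal A⁰ K, I ≠ 0 → I ≤ J → star I ≤ star J
  star_idem : ∀ I : FractionalIdeal A⁰ K, I ≠ 0 → star (star I) = star I

variable {A : Type*} [CommRing A] [IsDomain A]
  {K : Type*} [Field K] [Algebra A K] [IsFractionRing A K]

/-- `⋆` is of finite type: `I^⋆` is the union of the `J^⋆` over the finitely
generated (nonzero) fractional ideals `J ⊆ I`. -/
def StarOperation.IsFiniteType (s : StarOperation A K) : Prop :=
  ∀ I : FractionalIdeal A⁰ K, I ≠ 0 → ∀ x : K, x ∈ s.star I →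
    ∃ J : FractionalIdeal A⁰ K, J ≠ 0 ∧ J ≤ I ∧ (J : Submodule A K).FG ∧ x ∈ s.star J

/-- A (nonzero, integral) ideal `I` is a `⋆`-ideal if `I^⋆ = I`. -/
def IsStarIdeal (s : StarOperation A K) (I : Ideal A) : Prop :=
  I ≠ 0 ∧ s.star ↑I = (I : FractionalIdeal A⁰ K)

/-- A (nonzero, integral) ideal `I` is `⋆`-finite if `J^⋆ = I^⋆` for some finitely
generated (nonzero) ideal `J`. -/
def IsStarFinite (s : StarOperation A K) (I : Ideal A) : Prop :=
  I ≠ 0 ∧ ∃ J : Ideal A, J ≠ 0 ∧ J.FG ∧ s.star ↑J = s.star (I : FractionalIdeal A⁰ K)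

/-- An ideal of `A` is `⋆`-maximal if it is maximal among proper `⋆`-ideals. -/
def IsStarMaximal (s : StarOperation A K) (M : Ideal A) : Prop :=
  M ≠ ⊤ ∧ IsStarIdeal s M ∧ ∀ J : Ideal A, J ≠ ⊤ → IsStarIdeal s J → M ≤ J → J = M

/-- Property (⋆-c.a.): for every pair of proper ⋆-finite ⋆-ideals `𝔞₁, 𝔞₂` containing
`𝔞`, the ideal `(𝔞₁ + 𝔞₂)^⋆` is proper. -/
def StarCA (s : StarOperation A K) (𝔞 : Ideal A) : Prop :=
  ∀ 𝔞₁ 𝔞₂ : Ideal A, 𝔞 ≤ 𝔞₁ → 𝔞 ≤ 𝔞₂ →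
    𝔞₁ ≠ ⊤ → IsStarIdeal s 𝔞₁ → IsStarFinite s 𝔞₁ →
    𝔞₂ ≠ ⊤ → IsStarIdeal s 𝔞₂ → IsStarFinite s 𝔞₂ →
    s.star ↑(𝔞₁ + 𝔞₂) ≠ 1

/-- `ℱ` is a ⋆-comaximal collection over `a`: `a` lies in every member and
`(𝔞₁ + 𝔞₂)^⋆ = A` for all distinct members. -/
def IsStarComaximalOver (s : StarOperation A K) (a : A) (F : Set (Ideal A)) : Prop :=
  (∀ I ∈ F, a ∈ I) ∧ ∀ I ∈ F, ∀ J ∈ F, I ≠ J → s.star ↑(I + J) = 1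

/-- `(Σ')^⋆_a`: the ⋆-comaximal collections over `a` of proper ⋆-finite ⋆-ideals. -/
def SigmaP (s : StarOperation A K) (a : A) : Set (Set (Ideal A)) :=
  {F | IsStarComaximalOver s a F ∧ ∀ I ∈ F, I ≠ ⊤ ∧ IsStarIdeal s I ∧ IsStarFinite s I}

/-- `Σ^⋆_a`: members of `(Σ')^⋆_a` all of whose ideals satisfy (⋆-c.a.). -/
def SigmaCA (s : StarOperation A K) (a : A) : Set (Set (Ideal A)) :=
  {F | F ∈ SigmaP s a ∧ ∀ I ∈ F, StarCA s I}

/-!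
For `𝔞 ∈ ℱ`, property (⋆-c.a.) makes `𝔪_𝔞` closed under addition and finite type makes it a
⋆-ideal; every proper ⋆-ideal containing `𝔞` lies in `𝔪_𝔞`, so `𝔪_𝔞` is ⋆-maximal. Conversely,
a ⋆-maximal ideal `M ∋ a` that is none of the `𝔪_𝔞` is ⋆-comaximal with every `𝔞 ∈ ℱ`. By finite
type, finitely generated ideals `D_𝔞 ⊆ M` already witness this, and the ⋆-closure of the ideal
generated by `a`, a nonzero element of `M` and the `D_𝔞` is a proper ⋆-finite ⋆-ideal outside `ℱ`
that can be added to `ℱ`, against its maximality.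
-/

theorem Submodule.FG.exists_fg_le_and_le_sup {R M : Type*} [CommSemiring R] [AddCommMonoid M]
    [Module R M] {N P Q : Submodule R M} (hN : N.FG) (h : N ≤ P ⊔ Q) :
    ∃ P' ≤ P, P'.FG ∧ N ≤ P' ⊔ Q := by
  induction N, hN using Submodule.fg_induction with
  | singleton x =>
    obtain ⟨y, hy, z, hz, rfl⟩ := Submodule.mem_sup.mp (h (Submodule.mem_span_singleton_self x))
    refine ⟨R ∙ y, (Submodule.span_singleton_le_iff_mem y P).mpr hy,
      Submodule.fg_span_singleton y, ?_⟩
    exact (Submodule.span_singleton_le_iff_mem _ _).mpr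
      (Submodule.add_mem_sup (Submodule.mem_span_singleton_self y) hz)
  | sup N₁ N₂ _ _ ih₁ ih₂ =>
    obtain ⟨P₁, hP₁, hP₁fg, hN₁⟩ := ih₁ (le_sup_left.trans h)
    obtain ⟨P₂, hP₂, hP₂fg, hN₂⟩ := ih₂ (le_sup_right.trans h)
    refine ⟨P₁ ⊔ P₂, sup_le hP₁ hP₂, hP₁fg.sup hP₂fg, sup_le ?_ ?_⟩
    · exact hN₁.trans (sup_le_sup_right le_sup_left Q)
    · exact hN₂.trans (sup_le_sup_right le_sup_right Q)

namespace StarOperation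

open FractionalIdeal

section Closure

variable (s : StarOperation A K)

theorem star_sup_star {I J : FractionalIdeal A⁰ K} (hJ : J ≠ 0) :
    s.star (I ⊔ s.star J) = s.star (I ⊔ J) := by
  have hIJ : I ⊔ J ≠ 0 := fun h => hJ (le_antisymm (h ▸ le_sup_right) (zero_le J))
  have hIJ' : I ⊔ s.star J ≠ 0 := fun h =>
    hIJ (le_antisymm (h ▸ sup_le_sup_left (s.le_star J hJ) I) (zero_le _))
  refine le_antisymm ?_ (s.mono _ _ hIJ (sup_le_sup_left (s.le_star J hJ) I))
  have hle : I ⊔ s.star J ≤ s.star (I ⊔ J) :=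
    sup_le (le_sup_left.trans (s.le_star _ hIJ)) (s.mono J _ hJ le_sup_right)
  simpa only [s.star_idem _ hIJ] using s.mono _ _ hIJ' hle

theorem star_sup_congr {J J' : Ideal A} (hJ : J ≠ ⊥) (hJ' : J' ≠ ⊥)
    (h : s.star (J : FractionalIdeal A⁰ K) = s.star ↑J') (I : Ideal A) :
    s.star ((I ⊔ J : Ideal A) : FractionalIdeal A⁰ K) = s.star ↑(I ⊔ J') := by
  rw [coeIdeal_sup, coeIdeal_sup, ← sup_eq_add, ← sup_eq_add,
    ← s.star_sup_star (coeIdeal_ne_zero.mpr hJ), h, s.star_sup_star (coeIdeal_ne_zero.mpr hJ')]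

theorem star_le_one {I : Ideal A} (hI : I ≠ ⊥) : s.star (I : FractionalIdeal A⁰ K) ≤ 1 := by
  simpa only [s.star_one] using s.mono _ 1 (coeIdeal_ne_zero.mpr hI) coeIdeal_le_one

theorem star_eq_one_of_le {I J : Ideal A} (hI : I ≠ ⊥) (hIJ : I ≤ J)
    (h : s.star (I : FractionalIdeal A⁰ K) = 1) : s.star (J : FractionalIdeal A⁰ K) = 1 :=
  le_antisymm (s.star_le_one (ne_bot_of_le_ne_bot hI hIJ))
    (h ▸ s.mono _ _ (coeIdeal_ne_zero.mpr hI) ((coeIdeal_le_coeIdeal K).mpr hIJ))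

/-- For `I ≠ ⊥`, the integral ideal `I^⋆`; at `⊥` it is junk, as `s.star 0` is unconstrained. -/
def idealStar (I : Ideal A) : Ideal A :=
  (s.star I : Submodule A K).comap (Algebra.linearMap A K)

theorem coe_idealStar {I : Ideal A} (hI : I ≠ ⊥) :
    (s.idealStar I : FractionalIdeal A⁰ K) = s.star ↑I := by
  obtain ⟨b, hb⟩ := le_one_iff_exists_coeIdeal.mp (s.star_le_one hI)
  rw [idealStar, ← hb, coe_coeIdeal, IsLocalization.coeSubmodule,
    Submodule.comap_map_eq_of_injective (IsFractionRing.injective A K)]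

theorem le_idealStar {I : Ideal A} (hI : I ≠ ⊥) : I ≤ s.idealStar I := by
  rw [← coeIdeal_le_coeIdeal K, s.coe_idealStar hI]
  exact s.le_star _ (coeIdeal_ne_zero.mpr hI)

theorem star_coe_idealStar {I : Ideal A} (hI : I ≠ ⊥) :
    s.star (s.idealStar I : FractionalIdeal A⁰ K) = s.star ↑I := by
  rw [s.coe_idealStar hI, s.star_idem _ (coeIdeal_ne_zero.mpr hI)]

theorem idealStar_ne_bot {I : Ideal A} (hI : I ≠ ⊥) : s.idealStar I ≠ ⊥ :=
  ne_bot_of_le_ne_bot hI (s.le_idealStar hI)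

theorem isStarIdeal_idealStar {I : Ideal A} (hI : I ≠ ⊥) : IsStarIdeal s (s.idealStar I) :=
  ⟨s.idealStar_ne_bot hI, by rw [s.star_coe_idealStar hI, s.coe_idealStar hI]⟩

theorem isStarFinite_idealStar {I : Ideal A} (hI : I ≠ ⊥) (hfg : I.FG) :
    IsStarFinite s (s.idealStar I) :=
  ⟨s.idealStar_ne_bot hI, I, hI, hfg, (s.star_coe_idealStar hI).symm⟩

theorem idealStar_eq_top_iff {I : Ideal A} (hI : I ≠ ⊥) :
    s.idealStar I = ⊤ ↔ s.star (I : FractionalIdeal A⁰ K) = 1 := by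
  rw [← coeIdeal_inj (K := K), s.coe_idealStar hI, coeIdeal_top]

theorem idealStar_le {I J : Ideal A} (hI : I ≠ ⊥) (hIJ : I ≤ J) (hJ : IsStarIdeal s J) :
    s.idealStar I ≤ J := by
  rw [← coeIdeal_le_coeIdeal K, s.coe_idealStar hI, ← hJ.2]
  exact s.mono _ _ (coeIdeal_ne_zero.mpr hI) ((coeIdeal_le_coeIdeal K).mpr hIJ)

end Closure

variable {s : StarOperation A K}

theorem _root_.IsStarIdeal.star_ne_one {I : Ideal A} (hI : IsStarIdeal s I) (hIT : I ≠ ⊤) :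
    s.star (I : FractionalIdeal A⁰ K) ≠ 1 := by
  rwa [hI.2, Ne, coeIdeal_eq_one, Ideal.one_eq_top]

theorem _root_.IsStarFinite.isStarFinite_idealStar_sup {𝔞 I : Ideal A} (h𝔞 : IsStarFinite s 𝔞)
    (hI : I.FG) : IsStarFinite s (s.idealStar (I ⊔ 𝔞)) := by
  obtain ⟨h𝔞0, J, hJ0, hJfg, hJ𝔞⟩ := h𝔞
  have hI𝔞 : I ⊔ 𝔞 ≠ ⊥ := ne_bot_of_le_ne_bot h𝔞0 le_sup_right
  refine ⟨s.idealStar_ne_bot hI𝔞, I ⊔ J, ne_bot_of_le_ne_bot hJ0 le_sup_right,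
    Submodule.FG.sup hI hJfg, ?_⟩
  rw [s.star_coe_idealStar hI𝔞, s.star_sup_congr hJ0 h𝔞0 hJ𝔞]

theorem IsFiniteType.exists_fg_le (hs : s.IsFiniteType) {I : Ideal A} (hI : I ≠ ⊥) {x : K}
    (hx : x ∈ s.star ↑I) : ∃ J : Ideal A, J ≠ ⊥ ∧ J ≤ I ∧ J.FG ∧ x ∈ s.star ↑J := by
  obtain ⟨J', hJ'0, hJ'I, hJ'fg, hxJ'⟩ := hs _ (coeIdeal_ne_zero.mpr hI) x hx
  obtain ⟨J, rfl⟩ := le_one_iff_exists_coeIdeal.mp (hJ'I.trans coeIdeal_le_one)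
  exact ⟨J, coeIdeal_ne_zero.mp hJ'0, (coeIdeal_le_coeIdeal K).mp hJ'I,
    Submodule.fg_of_fg_map_injective _ (IsFractionRing.injective A K) hJ'fg, hxJ'⟩

theorem IsFiniteType.exists_fg_le_star_sup_eq_one (hs : s.IsFiniteType) {M I : Ideal A}
    (hI : I ≠ ⊥) (h : s.star ((M ⊔ I : Ideal A) : FractionalIdeal A⁰ K) = 1) :
    ∃ D ≤ M, D.FG ∧ s.star ((D ⊔ I : Ideal A) : FractionalIdeal A⁰ K) = 1 := by
  obtain ⟨J, hJ0, hJ, hJfg, h1J⟩ :=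
    hs.exists_fg_le (ne_bot_of_le_ne_bot hI le_sup_right) (h ▸ one_mem_one _)
  obtain ⟨D, hDM, hDfg, hJD⟩ := Submodule.FG.exists_fg_le_and_le_sup hJfg hJ
  have hJ1 : s.star (J : FractionalIdeal A⁰ K) = 1 :=
    le_antisymm (s.star_le_one hJ0) (one_le.mpr h1J)
  exact ⟨D, hDM, hDfg, s.star_eq_one_of_le hJ0 hJD hJ1⟩

theorem star_sup_ne_one_of_starCA {𝔞 : Ideal A} (h𝔞 : IsStarFinite s 𝔞) (hca : StarCA s 𝔞)
    {I J : Ideal A} (hI : I.FG) (hJ : J.FG)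
    (hI𝔞 : s.star ((I ⊔ 𝔞 : Ideal A) : FractionalIdeal A⁰ K) ≠ 1)
    (hJ𝔞 : s.star ((J ⊔ 𝔞 : Ideal A) : FractionalIdeal A⁰ K) ≠ 1) :
    s.star ((I ⊔ J ⊔ 𝔞 : Ideal A) : FractionalIdeal A⁰ K) ≠ 1 := by
  have hI0 : I ⊔ 𝔞 ≠ ⊥ := ne_bot_of_le_ne_bot h𝔞.1 le_sup_right
  have hJ0 : J ⊔ 𝔞 ≠ ⊥ := ne_bot_of_le_ne_bot h𝔞.1 le_sup_right
  have hle₁ := s.le_idealStar hI0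
  have hle₂ := s.le_idealStar hJ0
  have hsum := hca _ _ (le_sup_right.trans hle₁) (le_sup_right.trans hle₂)
    (mt (s.idealStar_eq_top_iff hI0).mp hI𝔞) (s.isStarIdeal_idealStar hI0)
    (h𝔞.isStarFinite_idealStar_sup hI)
    (mt (s.idealStar_eq_top_iff hJ0).mp hJ𝔞) (s.isStarIdeal_idealStar hJ0)
    (h𝔞.isStarFinite_idealStar_sup hJ)
  refine mt (s.star_eq_one_of_le (ne_bot_of_le_ne_bot h𝔞.1 le_sup_right) ?_) hsum
  exact sup_le (sup_le_sup (le_sup_left.trans hle₁) (le_sup_left.trans hle₂))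
    ((le_sup_right.trans hle₁).trans le_sup_left)

theorem star_sup_ne_one_of_fg {𝔞 : Ideal A} (h𝔞 : IsStarFinite s 𝔞) (hca : StarCA s 𝔞)
    {N : Ideal A} (hN : N.FG)
    (hmem : ∀ x ∈ N, s.star ((Ideal.span {x} ⊔ 𝔞 : Ideal A) : FractionalIdeal A⁰ K) ≠ 1) :
    s.star ((N ⊔ 𝔞 : Ideal A) : FractionalIdeal A⁰ K) ≠ 1 := by
  induction N, hN using Submodule.fg_induction with
  | singleton x => exact hmem x (Ideal.mem_span_singleton_self x)
  | sup N₁ N₂ hN₁ hN₂ ih₁ ih₂ =>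
    exact star_sup_ne_one_of_starCA h𝔞 hca hN₁ hN₂
      (ih₁ fun x hx => hmem x (Submodule.mem_sup_left hx))
      (ih₂ fun x hx => hmem x (Submodule.mem_sup_right hx))

variable (s) in
/-- The ideal `𝔪_𝔞`, taken as a span; under (⋆-c.a.) the spanning set is already an ideal. -/
def nonComaximal (𝔞 : Ideal A) : Ideal A :=
  Ideal.span {x | s.star ((Ideal.span {x} + 𝔞 : Ideal A) : FractionalIdeal A⁰ K) ≠ 1}

theorem le_nonComaximal_of_isStarIdeal {𝔞 M : Ideal A} (h𝔞 : 𝔞 ≠ ⊥) (hM : IsStarIdeal s M)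
    (hMT : M ≠ ⊤) (h𝔞M : 𝔞 ≤ M) : M ≤ s.nonComaximal 𝔞 := fun _ hx =>
  Ideal.subset_span <| mt (s.star_eq_one_of_le (ne_bot_of_le_ne_bot h𝔞 le_sup_right)
    (sup_le ((Ideal.span_singleton_le_iff_mem M).mpr hx) h𝔞M)) (hM.star_ne_one hMT)

theorem le_nonComaximal {𝔞 : Ideal A} (h𝔞 : IsStarIdeal s 𝔞) (h𝔞T : 𝔞 ≠ ⊤) :
    𝔞 ≤ s.nonComaximal 𝔞 :=
  le_nonComaximal_of_isStarIdeal h𝔞.1 h𝔞 h𝔞T le_rfl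

theorem mem_nonComaximal_iff {𝔞 : Ideal A} (h𝔞 : IsStarIdeal s 𝔞) (h𝔞T : 𝔞 ≠ ⊤)
    (h𝔞f : IsStarFinite s 𝔞) (hca : StarCA s 𝔞) {x : A} :
    x ∈ s.nonComaximal 𝔞 ↔ s.star ((Ideal.span {x} ⊔ 𝔞 : Ideal A) : FractionalIdeal A⁰ K) ≠ 1 := by
  have hne : ∀ I : Ideal A, I ⊔ 𝔞 ≠ ⊥ := fun _ => ne_bot_of_le_ne_bot h𝔞.1 le_sup_right
  refine ⟨fun hx => ?_, fun hx => Ideal.subset_span hx⟩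
  induction hx using Submodule.span_induction with
  | mem y hy => exact hy
  | zero => rw [Ideal.span_singleton_eq_bot.mpr rfl, bot_sup_eq]; exact h𝔞.star_ne_one h𝔞T
  | add y z _ _ hy hz =>
    have hyz : Ideal.span {y + z} ≤ Ideal.span {y} ⊔ Ideal.span {z} :=
      (Ideal.span_singleton_le_iff_mem _).mpr (Submodule.add_mem_sup
        (Ideal.mem_span_singleton_self y) (Ideal.mem_span_singleton_self z))
    exact mt (s.star_eq_one_of_le (hne _) (sup_le_sup_right hyz 𝔞))
      (star_sup_ne_one_of_starCA h𝔞f hca (Submodule.fg_span_singleton y)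
        (Submodule.fg_span_singleton z) hy hz)
  | smul c y _ hy =>
    have hcy : Ideal.span {c • y} ≤ Ideal.span {y} :=
      Ideal.span_singleton_le_span_singleton.mpr (dvd_mul_left y c)
    exact mt (s.star_eq_one_of_le (hne _) (sup_le_sup_right hcy 𝔞)) hy

theorem coe_nonComaximal {𝔞 : Ideal A} (h𝔞 : IsStarIdeal s 𝔞) (h𝔞T : 𝔞 ≠ ⊤)
    (h𝔞f : IsStarFinite s 𝔞) (hca : StarCA s 𝔞) :
    (s.nonComaximal 𝔞 : Set A) =
      {x | s.star ((Ideal.span {x} + 𝔞 : Ideal A) : FractionalIdeal A⁰ K) ≠ 1} :=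
  Set.ext fun _ => mem_nonComaximal_iff h𝔞 h𝔞T h𝔞f hca

theorem nonComaximal_ne_top {𝔞 : Ideal A} (h𝔞 : IsStarIdeal s 𝔞) (h𝔞T : 𝔞 ≠ ⊤)
    (h𝔞f : IsStarFinite s 𝔞) (hca : StarCA s 𝔞) : s.nonComaximal 𝔞 ≠ ⊤ := by
  rw [Ne, Ideal.eq_top_iff_one, mem_nonComaximal_iff h𝔞 h𝔞T h𝔞f hca, Ideal.span_singleton_one,
    top_sup_eq, coeIdeal_top, s.star_one, not_not]

theorem isStarIdeal_nonComaximal (hs : s.IsFiniteType) {𝔞 : Ideal A} (h𝔞 : IsStarIdeal s 𝔞)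
    (h𝔞T : 𝔞 ≠ ⊤) (h𝔞f : IsStarFinite s 𝔞) (hca : StarCA s 𝔞) :
    IsStarIdeal s (s.nonComaximal 𝔞) := by
  have hm : s.nonComaximal 𝔞 ≠ ⊥ := ne_bot_of_le_ne_bot h𝔞.1 (le_nonComaximal h𝔞 h𝔞T)
  refine ⟨hm, le_antisymm (fun ξ hξ => ?_) (s.le_star _ (coeIdeal_ne_zero.mpr hm))⟩
  obtain ⟨J, hJ0, hJm, hJfg, hξJ⟩ := hs.exists_fg_le hm hξ
  have hJ𝔞 : J ⊔ 𝔞 ≠ ⊥ := ne_bot_of_le_ne_bot hJ0 le_sup_left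
  have hJ𝔞T : s.idealStar (J ⊔ 𝔞) ≠ ⊤ := mt (s.idealStar_eq_top_iff hJ𝔞).mp
    (star_sup_ne_one_of_fg h𝔞f hca hJfg fun x hx =>
      (mem_nonComaximal_iff h𝔞 h𝔞T h𝔞f hca).mp (hJm hx))
  have hle : s.idealStar (J ⊔ 𝔞) ≤ s.nonComaximal 𝔞 :=
    le_nonComaximal_of_isStarIdeal h𝔞.1 (s.isStarIdeal_idealStar hJ𝔞) hJ𝔞T
      (le_sup_right.trans (s.le_idealStar hJ𝔞))
  have hξ' : ξ ∈ (s.idealStar (J ⊔ 𝔞) : FractionalIdeal A⁰ K) := by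
    rw [s.coe_idealStar hJ𝔞]
    exact s.mono _ _ (coeIdeal_ne_zero.mpr hJ0) ((coeIdeal_le_coeIdeal K).mpr le_sup_left) hξJ
  exact (coeIdeal_le_coeIdeal K).mpr hle hξ'

theorem isStarMaximal_nonComaximal (hs : s.IsFiniteType) {𝔞 : Ideal A} (h𝔞 : IsStarIdeal s 𝔞)
    (h𝔞T : 𝔞 ≠ ⊤) (h𝔞f : IsStarFinite s 𝔞) (hca : StarCA s 𝔞) :
    IsStarMaximal s (s.nonComaximal 𝔞) :=
  ⟨nonComaximal_ne_top h𝔞 h𝔞T h𝔞f hca, isStarIdeal_nonComaximal hs h𝔞 h𝔞T h𝔞f hca,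
    fun _ hJT hJ hmJ => le_antisymm
      (le_nonComaximal_of_isStarIdeal h𝔞.1 hJ hJT ((le_nonComaximal h𝔞 h𝔞T).trans hmJ)) hmJ⟩

theorem _root_.IsStarMaximal.le_of_star_sup_ne_one {M I : Ideal A} (hM : IsStarMaximal s M)
    (h : s.star ((M ⊔ I : Ideal A) : FractionalIdeal A⁰ K) ≠ 1) : I ≤ M := by
  have hMI : M ⊔ I ≠ ⊥ := ne_bot_of_le_ne_bot hM.2.1.1 le_sup_left
  have hle := s.le_idealStar hMI
  have heq : s.idealStar (M ⊔ I) = M := hM.2.2 _ (mt (s.idealStar_eq_top_iff hMI).mp h)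
    (s.isStarIdeal_idealStar hMI) (le_sup_left.trans hle)
  exact heq ▸ le_sup_right.trans hle

theorem _root_.IsStarMaximal.eq_nonComaximal (hs : s.IsFiniteType) {𝔞 M : Ideal A}
    (hM : IsStarMaximal s M) (h𝔞M : 𝔞 ≤ M) (h𝔞 : IsStarIdeal s 𝔞) (h𝔞T : 𝔞 ≠ ⊤)
    (h𝔞f : IsStarFinite s 𝔞) (hca : StarCA s 𝔞) : M = s.nonComaximal 𝔞 :=
  (hM.2.2 _ (nonComaximal_ne_top h𝔞 h𝔞T h𝔞f hca) (isStarIdeal_nonComaximal hs h𝔞 h𝔞T h𝔞f hca)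
    (le_nonComaximal_of_isStarIdeal h𝔞.1 hM.2.1 hM.1 h𝔞M)).symm

theorem insert_mem_sigmaP {a : A} {F : Set (Ideal A)} (hF : F ∈ SigmaP s a) {b : Ideal A}
    (hbT : b ≠ ⊤) (hb : IsStarIdeal s b) (hbf : IsStarFinite s b) (hab : a ∈ b)
    (hcomax : ∀ 𝔞 ∈ F, s.star ((b ⊔ 𝔞 : Ideal A) : FractionalIdeal A⁰ K) = 1) :
    insert b F ∈ SigmaP s a := by
  obtain ⟨⟨hmem, hcomaxF⟩, hprop⟩ := hF
  refine ⟨⟨Set.forall_mem_insert.mpr ⟨hab, hmem⟩, ?_⟩,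
    Set.forall_mem_insert.mpr ⟨⟨hbT, hb, hbf⟩, hprop⟩⟩
  rintro I (rfl | hI) J (rfl | hJ) hIJ
  · exact absurd rfl hIJ
  · exact hcomax J hJ
  · rw [add_comm]
    exact hcomax I hI
  · exact hcomaxF I hI J hJ hIJ

theorem exists_insert_mem_sigmaP (hs : s.IsFiniteType) {a : A} {F : Set (Ideal A)}
    (hFfin : F.Finite) (hF : F ∈ SigmaP s a) {M : Ideal A} (hM : IsStarIdeal s M) (hMT : M ≠ ⊤)
    (haM : a ∈ M) (hcomax : ∀ 𝔞 ∈ F, s.star ((M ⊔ 𝔞 : Ideal A) : FractionalIdeal A⁰ K) = 1) :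
    ∃ b ∉ F, insert b F ∈ SigmaP s a := by
  classical
  choose! D hDM hDfg hD using fun 𝔞 h𝔞 =>
    hs.exists_fg_le_star_sup_eq_one (hF.2 𝔞 h𝔞).2.1.1 (hcomax 𝔞 h𝔞)
  obtain ⟨x, hxM, hx0⟩ := Submodule.exists_mem_ne_zero_of_ne_bot hM.1
  -- `x` keeps `C` nonzero when `a = 0`
  set C : Ideal A := Ideal.span {a, x} ⊔ hFfin.toFinset.sup D
  have haxC : Ideal.span {a, x} ≤ C := le_sup_left
  have hC0 : C ≠ ⊥ := (Submodule.ne_bot_iff C).mpr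
    ⟨x, haxC (Ideal.subset_span (Set.mem_insert_of_mem a rfl)), hx0⟩
  have hCfg : C.FG := Submodule.FG.sup (Submodule.fg_span (Set.toFinite _))
    (Submodule.fg_finset_sup _ _ fun 𝔞 h𝔞 => hDfg 𝔞 (hFfin.mem_toFinset.mp h𝔞))
  have hCM : C ≤ M :=
    sup_le (Ideal.span_le.mpr (Set.insert_subset haM (Set.singleton_subset_iff.mpr hxM)))
    (Finset.sup_le fun 𝔞 h𝔞 => hDM 𝔞 (hFfin.mem_toFinset.mp h𝔞))
  have hbM : s.idealStar C ≤ M := s.idealStar_le hC0 hCM hM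
  have hcomax_b :
      ∀ 𝔞 ∈ F, s.star ((s.idealStar C ⊔ 𝔞 : Ideal A) : FractionalIdeal A⁰ K) = 1 := by
    intro 𝔞 h𝔞
    rw [sup_comm, s.star_sup_congr (s.idealStar_ne_bot hC0) hC0 (s.star_coe_idealStar hC0),
      sup_comm]
    exact s.star_eq_one_of_le (ne_bot_of_le_ne_bot (hF.2 𝔞 h𝔞).2.1.1 le_sup_right)
      (sup_le_sup_right ((Finset.le_sup (hFfin.mem_toFinset.mpr h𝔞)).trans le_sup_right) 𝔞)
      (hD 𝔞 h𝔞)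
  refine ⟨s.idealStar C, fun hbF => ?_, insert_mem_sigmaP hF (ne_top_of_le_ne_top hMT hbM)
    (s.isStarIdeal_idealStar hC0) (s.isStarFinite_idealStar hC0 hCfg)
    (s.le_idealStar hC0 (haxC (Ideal.subset_span (Set.mem_insert a _)))) hcomax_b⟩
  exact hM.star_ne_one hMT (sup_eq_left.mpr hbM ▸ hcomax _ hbF)

theorem setOf_isStarMaximal_eq_image_nonComaximal (hs : s.IsFiniteType) {a : A}
    {F : Set (Ideal A)} (hFfin : F.Finite) (hF : F ∈ SigmaCA s a)
    (hFmax : ∀ G ∈ SigmaP s a, F ⊆ G → G = F) :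
    {M : Ideal A | IsStarMaximal s M ∧ a ∈ M} = s.nonComaximal '' F := by
  obtain ⟨hFP, hca⟩ := hF
  ext M
  constructor
  · rintro ⟨hM, haM⟩
    by_contra hne
    have hcomax : ∀ 𝔞 ∈ F, s.star ((M ⊔ 𝔞 : Ideal A) : FractionalIdeal A⁰ K) = 1 := by
      intro 𝔞 h𝔞F
      obtain ⟨h𝔞T, h𝔞, h𝔞f⟩ := hFP.2 𝔞 h𝔞F
      by_contra h
      exact hne ⟨𝔞, h𝔞F, (hM.eq_nonComaximal hs (hM.le_of_star_sup_ne_one h) h𝔞 h𝔞T h𝔞f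
        (hca 𝔞 h𝔞F)).symm⟩
    obtain ⟨b, hbF, hbins⟩ := exists_insert_mem_sigmaP hs hFfin hFP hM.2.1 hM.1 haM hcomax
    exact hbF (hFmax _ hbins (Set.subset_insert b F) ▸ Set.mem_insert b F)
  · rintro ⟨𝔞, h𝔞F, rfl⟩
    obtain ⟨h𝔞T, h𝔞, h𝔞f⟩ := hFP.2 𝔞 h𝔞F
    exact ⟨isStarMaximal_nonComaximal hs h𝔞 h𝔞T h𝔞f (hca 𝔞 h𝔞F),
      le_nonComaximal h𝔞 h𝔞T (hFP.1.1 𝔞 h𝔞F)⟩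

end StarOperation

theorem star_maximal_ideals_of_maximal_comaximal_family_general
    (s : StarOperation A K) (hs : s.IsFiniteType) (a : A)
    (F : Set (Ideal A)) (hFfin : F.Finite) (hF : F ∈ SigmaCA s a)
    (hFmax : ∀ G ∈ SigmaP s a, F ⊆ G → G = F) :
    {M : Ideal A | IsStarMaximal s M ∧ a ∈ M} =
      {M : Ideal A | ∃ 𝔞 ∈ F, (M : Set A) = {x : A | s.star ↑(Ideal.span {x} + 𝔞) ≠ 1}} ∧
    {M : Ideal A | IsStarMaximal s M ∧ a ∈ M}.Finite := by
  have h := StarOperation.setOf_isStarMaximal_eq_image_nonComaximal hs hFfin hF hFmax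
  refine ⟨?_, h ▸ hFfin.image _⟩
  obtain ⟨hFP, hca⟩ := hF
  rw [h]
  ext M
  refine exists_congr fun 𝔞 => and_congr_right fun h𝔞F => ?_
  obtain ⟨h𝔞T, h𝔞, h𝔞f⟩ := hFP.2 𝔞 h𝔞F
  rw [← StarOperation.coe_nonComaximal h𝔞 h𝔞T h𝔞f (hca 𝔞 h𝔞F), SetLike.coe_set_eq, eq_comm]

/-- Let `⋆` be a finite type star operation on `A` and `a ≠ 0`. If there is a finite
collection `ℱ ∈ Σ^⋆_a` which is maximal in `((Σ')^⋆_a, ⊆)`, then the ⋆-maximal ideals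
containing `a` are exactly the ideals `𝔪_𝔞 = {x : ((x) + 𝔞)^⋆ ≠ A}` for `𝔞 ∈ ℱ`;
in particular there are only finitely many of them. -/
theorem star_maximal_ideals_of_maximal_comaximal_family
    (s : StarOperation A K) (hs : s.IsFiniteType) (a : A) (ha : a ≠ 0)
    (F : Set (Ideal A)) (hFfin : F.Finite) (hF : F ∈ SigmaCA s a)
    (hFmax : ∀ G ∈ SigmaP s a, F ⊆ G → G = F) :
    {M : Ideal A | IsStarMaximal s M ∧ a ∈ M} =
      {M : Ideal A | ∃ 𝔞 ∈ F, (M : Set A) = {x : A | s.star ↑(Ideal.span {x} + 𝔞) ≠ 1}} ∧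
    {M : Ideal A | IsStarMaximal s M ∧ a ∈ M}.Finite :=
  star_maximal_ideals_of_maximal_comaximal_family_general s hs a F hFfin hF hFmax
end

section
/- Let A be an integral domain and Δ ⊆ Spec(A) such that A = ⋂_{p∈Δ} A_p is a locally finite intersection. For each p ∈ Δ let ⋆_p be a finite type star operation on A_p, and let ⋆ = ∧_{p∈Δ}⋆_p be the star operation on A defined by I^⋆ = ⋂_{p∈Δ}(IA_p)^{⋆_p}. If 𝔞 is a nonzero ideal of A such that 𝔞A_p is ⋆_p-finite for each p ∈ Δ, then 𝔞 is ⋆-finite. -/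
/-! Since `⋆_p` has finite type, a `⋆_p`-finite ideal `𝔞A_p` has the same `⋆_p`-closure as some
finitely generated `C ⊆ 𝔞A_p`, and the generators of `C` come from finitely many elements of `𝔞`;
every ideal between the span of these elements and `𝔞` then extends to an ideal with the same
`⋆_p`-closure as `𝔞A_p`. Fix `0 ≠ a ∈ 𝔞`. By local finiteness `a` is a unit in `A_p` for all but
finitely many `p ∈ Δ`, and there `𝔟A_p = 𝔞A_p = A_p` for every `𝔟 ∋ a`. So the ideal `𝔟` spanned
by `a` and the elements chosen for the finitely many remaining primes has `𝔟^⋆ = 𝔞^⋆`. -/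

open scoped nonZeroDivisors

variable {A : Type*} [CommRing A] [IsDomain A]
  {K : Type*} [Field K] [Algebra A K] [IsFractionRing A K]

variable (A : Type*) [CommRing A] [IsDomain A]
  (K : Type*) [Field K] [Algebra A K] [IsFractionRing A K]

/-- The localization `A_p` of `A` at a prime ideal `p`, realized as a subalgebra of the
quotient field `K` of `A`. -/
@[reducible] noncomputable def locAt (p : Ideal A) (hp : p.IsPrime) : Subalgebra A K :=
  Localization.subalgebra K (@Ideal.primeCompl A _ p hp)
    (@Ideal.primeCompl_le_nonZeroDivisors A _ _ p hp)

theorem Ideal.exists_finite_subset_le_map {A B : Type*} [CommRing A] [CommRing B] (f : A →+* B)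
    {𝔞 : Ideal A} {C : Ideal B} (hC : C.FG) (hC𝔞 : C ≤ 𝔞.map f) :
    ∃ G : Set A, G.Finite ∧ G ⊆ 𝔞 ∧ C ≤ (Ideal.span G).map f := by
  induction C, hC using Submodule.fg_induction with
  | singleton x =>
    have hx : x ∈ Submodule.span B (f '' 𝔞) := hC𝔞 (Submodule.mem_span_singleton_self x)
    obtain ⟨T, hT, hxT⟩ := Submodule.mem_span_finite_of_mem_span hx
    obtain ⟨G, hG𝔞, hG, hGT⟩ := Set.exists_subset_image_finite_and
      (p := fun T : Set B => x ∈ Submodule.span B T) |>.1 ⟨T, hT, T.finite_toSet, hxT⟩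
    refine ⟨G, hG, hG𝔞, ?_⟩
    rw [Ideal.map_span, Submodule.span_singleton_le_iff_mem]
    exact hGT
  | sup C₁ C₂ _ _ ih₁ ih₂ =>
    obtain ⟨G₁, hG₁, hG₁𝔞, hCG₁⟩ := ih₁ (le_sup_left.trans hC𝔞)
    obtain ⟨G₂, hG₂, hG₂𝔞, hCG₂⟩ := ih₂ (le_sup_right.trans hC𝔞)
    refine ⟨G₁ ∪ G₂, hG₁.union hG₂, Set.union_subset hG₁𝔞 hG₂𝔞, ?_⟩
    rw [Ideal.span_union, Ideal.map_sup]
    exact sup_le_sup hCG₁ hCG₂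

namespace StarOperation

variable {R : Type*} [CommRing R] [IsDomain R] {K : Type*} [Field K] [Algebra R K]
  [IsFractionRing R K] (s : StarOperation R K)

theorem star_le_star_of_le_star {I J : FractionalIdeal R⁰ K} (hI : I ≠ 0) (hJ : J ≠ 0)
    (h : I ≤ s.star J) : s.star I ≤ s.star J :=
  s.star_idem J hJ ▸ s.mono I _ hI h

theorem star_mono_coeIdeal {C D : Ideal R} (hC : C ≠ ⊥) (hCD : C ≤ D) :
    s.star (C : FractionalIdeal R⁰ K) ≤ s.star D :=
  s.mono _ _ (FractionalIdeal.coeIdeal_ne_zero.2 hC)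
    ((FractionalIdeal.coeIdeal_le_coeIdeal K).2 hCD)

theorem star_eq_of_le_of_le {C D I : Ideal R} (hC : C ≠ ⊥) (hCD : C ≤ D) (hDI : D ≤ I)
    (h : s.star (C : FractionalIdeal R⁰ K) = s.star I) :
    s.star (D : FractionalIdeal R⁰ K) = s.star I :=
  le_antisymm (s.star_mono_coeIdeal (ne_bot_of_le_ne_bot hC hCD) hDI)
    (h ▸ s.star_mono_coeIdeal hC hCD)

namespace IsFiniteType

variable {s}

theorem exists_fg_le_of_mem_star (hs : s.IsFiniteType) {I : Ideal R} (hI : I ≠ ⊥) {x : K}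
    (hx : x ∈ s.star I) : ∃ C : Ideal R, C ≠ ⊥ ∧ C.FG ∧ C ≤ I ∧ x ∈ s.star C := by
  obtain ⟨J, hJ, hJI, hJfg, hxJ⟩ := hs _ (FractionalIdeal.coeIdeal_ne_zero.2 hI) x hx
  obtain ⟨C, rfl⟩ := FractionalIdeal.le_one_iff_exists_coeIdeal.1
    (hJI.trans FractionalIdeal.coeIdeal_le_one)
  exact ⟨C, FractionalIdeal.coeIdeal_ne_zero.1 hJ,
    (FractionalIdeal.coeIdeal_fg R⁰ (IsFractionRing.injective R K) C).1 hJfg,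
    (FractionalIdeal.coeIdeal_le_coeIdeal K).1 hJI, hxJ⟩

theorem exists_fg_le_of_le_star (hs : s.IsFiniteType) {I J : Ideal R} (hI : I ≠ ⊥) (hJ : J.FG)
    (hJI : (J : FractionalIdeal R⁰ K) ≤ s.star I) :
    ∃ C : Ideal R, C ≠ ⊥ ∧ C.FG ∧ C ≤ I ∧ (J : FractionalIdeal R⁰ K) ≤ s.star C := by
  induction J, hJ using Submodule.fg_induction with
  | singleton x =>
    simp only [FractionalIdeal.coeIdeal_span_singleton, FractionalIdeal.spanSingleton_le_iff_mem]
      at hJI ⊢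
    exact hs.exists_fg_le_of_mem_star hI hJI
  | sup J₁ J₂ _ _ ih₁ ih₂ =>
    rw [FractionalIdeal.coeIdeal_sup, ← FractionalIdeal.sup_eq_add, sup_le_iff] at hJI
    obtain ⟨C₁, hC₁, hC₁fg, hC₁I, hJC₁⟩ := ih₁ hJI.1
    obtain ⟨C₂, hC₂, hC₂fg, hC₂I, hJC₂⟩ := ih₂ hJI.2
    refine ⟨C₁ ⊔ C₂, ne_bot_of_le_ne_bot hC₁ le_sup_left, Submodule.FG.sup hC₁fg hC₂fg,
      sup_le hC₁I hC₂I, ?_⟩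
    rw [FractionalIdeal.coeIdeal_sup, ← FractionalIdeal.sup_eq_add]
    exact sup_le (hJC₁.trans (s.star_mono_coeIdeal hC₁ le_sup_left))
      (hJC₂.trans (s.star_mono_coeIdeal hC₂ le_sup_right))

theorem exists_fg_le_star_eq (hs : s.IsFiniteType) {I : Ideal R} (hI : IsStarFinite s I) :
    ∃ C : Ideal R, C ≠ ⊥ ∧ C.FG ∧ C ≤ I ∧
      s.star (C : FractionalIdeal R⁰ K) = s.star (I : FractionalIdeal R⁰ K) := by
  obtain ⟨hI, J, hJ, hJfg, hJI⟩ := hI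
  have hJ' : (J : FractionalIdeal R⁰ K) ≠ 0 := FractionalIdeal.coeIdeal_ne_zero.2 hJ
  obtain ⟨C, hC, hCfg, hCI, hJC⟩ := hs.exists_fg_le_of_le_star hI hJfg (hJI ▸ s.le_star _ hJ')
  refine ⟨C, hC, hCfg, hCI, le_antisymm (s.star_mono_coeIdeal hC hCI) ?_⟩
  exact hJI ▸ s.star_le_star_of_le_star hJ' (FractionalIdeal.coeIdeal_ne_zero.2 hC) hJC

theorem exists_finite_forall_star_map_eq (hs : s.IsFiniteType) {A : Type*} [CommRing A]
    (f : A →+* R) {𝔞 : Ideal A} (h𝔞 : IsStarFinite s (𝔞.map f)) :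
    ∃ G : Set A, G.Finite ∧ G ⊆ 𝔞 ∧ ∀ 𝔟 : Ideal A, Ideal.span G ≤ 𝔟 → 𝔟 ≤ 𝔞 →
      s.star (𝔟.map f : FractionalIdeal R⁰ K) = s.star (𝔞.map f : FractionalIdeal R⁰ K) := by
  obtain ⟨C, hC, hCfg, hC𝔞, hCstar⟩ := hs.exists_fg_le_star_eq h𝔞
  obtain ⟨G, hG, hG𝔞, hCG⟩ := Ideal.exists_finite_subset_le_map f hCfg hC𝔞
  exact ⟨G, hG, hG𝔞, fun 𝔟 hG𝔟 h𝔟𝔞 =>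
    s.star_eq_of_le_of_le hC (hCG.trans (Ideal.map_mono hG𝔟)) (Ideal.map_mono h𝔟𝔞) hCstar⟩

end IsFiniteType

end StarOperation

theorem starFinite_of_locally_starFinite_general
    {A : Type*} [CommRing A] [IsDomain A]
    {K : Type*} [Field K] [Algebra A K] [IsFractionRing A K]
    (Δ : Set (Ideal A)) (hΔ : ∀ p ∈ Δ, p.IsPrime)
    (hlf : ∀ a : A, a ≠ 0 →
      {p : Ideal A | ∃ h : p ∈ Δ,
        ¬IsUnit (algebraMap A (locAt A K p (hΔ p h)) a)}.Finite)
    (star : ∀ (p : Ideal A) (hp : p.IsPrime), p ∈ Δ → StarOperation (locAt A K p hp) K)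
    (hft : ∀ (p : Ideal A) (hp : p.IsPrime) (h : p ∈ Δ), (star p hp h).IsFiniteType)
    (𝔞 : Ideal A) (h𝔞 : 𝔞 ≠ 0)
    (hloc : ∀ (p : Ideal A) (hp : p.IsPrime) (h : p ∈ Δ),
      IsStarFinite (star p hp h) (𝔞.map (algebraMap A (locAt A K p hp)))) :
    ∃ 𝔟 : Ideal A, 𝔟 ≠ 0 ∧ 𝔟.FG ∧ 𝔟 ≤ 𝔞 ∧
      (⋂ (p : Ideal A), ⋂ (h : p ∈ Δ),
          (((star p (hΔ p h) h).star
            ↑(𝔟.map (algebraMap A (locAt A K p (hΔ p h))))) : Set K)) =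
      (⋂ (p : Ideal A), ⋂ (h : p ∈ Δ),
          (((star p (hΔ p h) h).star
            ↑(𝔞.map (algebraMap A (locAt A K p (hΔ p h))))) : Set K)) := by
  obtain ⟨a, ha𝔞, ha⟩ := Submodule.exists_mem_ne_zero_of_ne_bot h𝔞
  have hG (p : Ideal A) : ∃ G : Set A, G.Finite ∧ G ⊆ 𝔞 ∧ ∀ (h : p ∈ Δ) (𝔟 : Ideal A),
      Ideal.span G ≤ 𝔟 → 𝔟 ≤ 𝔞 →
        (star p (hΔ p h) h).star ↑(𝔟.map (algebraMap A (locAt A K p (hΔ p h)))) =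
          (star p (hΔ p h) h).star ↑(𝔞.map (algebraMap A (locAt A K p (hΔ p h)))) := by
    by_cases h : p ∈ Δ
    · obtain ⟨G, hG, hG𝔞, hGstar⟩ :=
        (hft p (hΔ p h) h).exists_finite_forall_star_map_eq _ (hloc p (hΔ p h) h)
      exact ⟨G, hG, hG𝔞, fun _ => hGstar⟩
    · exact ⟨∅, Set.finite_empty, Set.empty_subset _, fun h' => absurd h' h⟩
  choose G hG hG𝔞 hGstar using hG
  set S := {p : Ideal A | ∃ h : p ∈ Δ, ¬IsUnit (algebraMap A (locAt A K p (hΔ p h)) a)}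
  set 𝔟 := Ideal.span (insert a (⋃ p ∈ S, G p))
  have ha𝔟 : a ∈ 𝔟 := Ideal.subset_span (Set.mem_insert _ _)
  have h𝔟𝔞 : 𝔟 ≤ 𝔞 :=
    Ideal.span_le.2 (Set.insert_subset ha𝔞 (Set.iUnion₂_subset fun p _ => hG𝔞 p))
  refine ⟨𝔟, fun h => ha (by rwa [h] at ha𝔟),
    Submodule.fg_span (((hlf a ha).biUnion fun p _ => hG p).insert a), h𝔟𝔞,
    Set.iInter_congr fun p => Set.iInter_congr fun h => ?_⟩
  by_cases hu : IsUnit (algebraMap A (locAt A K p (hΔ p h)) a)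
  · rw [Ideal.eq_top_of_isUnit_mem _ (Ideal.mem_map_of_mem _ ha𝔟) hu,
      Ideal.eq_top_of_isUnit_mem _ (Ideal.mem_map_of_mem _ ha𝔞) hu]
  · have hp : p ∈ S := ⟨h, hu⟩
    rw [hGstar p h 𝔟 (Ideal.span_mono ?_) h𝔟𝔞]
    exact (Set.subset_biUnion_of_mem hp).trans (Set.subset_insert _ _)

/-- Let `A = ⋂_{p ∈ Δ} A_p` be a locally finite intersection of localizations at primes
`p ∈ Δ`, let `⋆_p` be a finite type star operation on `A_p` for each `p ∈ Δ`, and let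
`⋆ = ∧_{p∈Δ} ⋆_p` be given by `I^⋆ = ⋂_{p∈Δ} (IA_p)^{⋆_p}`. If `𝔞` is a nonzero ideal
of `A` such that `𝔞A_p` is `⋆_p`-finite for each `p ∈ Δ`, then `𝔞` is `⋆`-finite. -/
theorem starFinite_of_locally_starFinite
    {A : Type*} [CommRing A] [IsDomain A]
    {K : Type*} [Field K] [Algebra A K] [IsFractionRing A K]
    (Δ : Set (Ideal A)) (hΔ : ∀ p ∈ Δ, p.IsPrime)
    (hint : (⋂ (p : Ideal A), ⋂ (h : p ∈ Δ), ((locAt A K p (hΔ p h) : Subalgebra A K) : Set K))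
      = Set.range (algebraMap A K))
    (hlf : ∀ a : A, a ≠ 0 →
      {p : Ideal A | ∃ h : p ∈ Δ,
        ¬IsUnit (algebraMap A (locAt A K p (hΔ p h)) a)}.Finite)
    (star : ∀ (p : Ideal A) (hp : p.IsPrime), p ∈ Δ → StarOperation (locAt A K p hp) K)
    (hft : ∀ (p : Ideal A) (hp : p.IsPrime) (h : p ∈ Δ), (star p hp h).IsFiniteType)
    (𝔞 : Ideal A) (h𝔞 : 𝔞 ≠ 0)
    (hloc : ∀ (p : Ideal A) (hp : p.IsPrime) (h : p ∈ Δ),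
      IsStarFinite (star p hp h) (𝔞.map (algebraMap A (locAt A K p hp)))) :
    ∃ 𝔟 : Ideal A, 𝔟 ≠ 0 ∧ 𝔟.FG ∧ 𝔟 ≤ 𝔞 ∧
      (⋂ (p : Ideal A), ⋂ (h : p ∈ Δ),
          (((star p (hΔ p h) h).star
            ↑(𝔟.map (algebraMap A (locAt A K p (hΔ p h))))) : Set K)) =
      (⋂ (p : Ideal A), ⋂ (h : p ∈ Δ),
          (((star p (hΔ p h) h).star
            ↑(𝔞.map (algebraMap A (locAt A K p (hΔ p h))))) : Set K)) :=
  starFinite_of_locally_starFinite_general Δ hΔ hlf star hft 𝔞 h𝔞 hloc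
end
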